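/- arXiv:1712.01079 — 2 statements merged into one kernel-verified Lean document; each statement's English description precedes it below -/
import Mathlib

section
/- Let Γ be a connected, triangle-free, planar simplicial graph with at least five vertices and no separating vertices or edges, with a fixed planar embedding f. If (Γ_1, Γ_2) is a strong visual decomposition of Γ along a 4-cycle σ with respect to f, then each Γ_i is connected, triangle-free, planar, has at least five vertices, and has no separating vertices or edges. -/
open Set

namespace Paper

/-- Word metric distance with respect to a (symmetrized) generating set `S`. -/
noncomputable def wordDist {G : Type*} [Group G] (S : Set G) (g h : G) : ℕ :=
  sInf {n | ∃ w : List G, w.length = n ∧ (∀ x ∈ w, x ∈ S ∨ x⁻¹ ∈ S) ∧ g⁻¹ * h = w.prod}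

/-- A discrete `(K, C)`-quasi-geodesic in the word metric. -/
def IsQuasiGeodesic {G : Type*} [Group G] (S : Set G) (K C : ℝ) {n : ℕ}
    (q : Fin (n + 1) → G) : Prop :=
  ∀ i j : Fin (n + 1),
    (wordDist S (q i) (q j) : ℝ) ≤ K * |((i : ℕ) : ℝ) - ((j : ℕ) : ℝ)| + C ∧
      |((i : ℕ) : ℝ) - ((j : ℕ) : ℝ)| / K - C ≤ (wordDist S (q i) (q j) : ℝ)

/-- A subset `H` is strongly quasiconvex (Morse) with respect to the word metric of `S`:
every quasi-geodesic with endpoints in `H` stays uniformly close to `H`. -/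
def StronglyQuasiconvex {G : Type*} [Group G] (S : Set G) (H : Set G) : Prop :=
  ∀ K C : ℝ, 1 ≤ K → 0 ≤ C → ∃ M : ℝ, ∀ (n : ℕ) (q : Fin (n + 1) → G),
    q 0 ∈ H → q (Fin.last n) ∈ H → IsQuasiGeodesic S K C q →
      ∀ i, ∃ h ∈ H, (wordDist S (q i) h : ℝ) ≤ M

/-- The subgroup `H` (with generating data `T`) is undistorted in `G` (with generating data `S`):
the inclusion is a quasi-isometric embedding for the word metrics. -/
def Undistorted {G : Type*} [Group G] (S : Set G) (H : Subgroup G) (T : Set H) : Prop :=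
  ∃ K C : ℝ, 1 ≤ K ∧ 0 ≤ C ∧ ∀ a b : H,
    (wordDist T a b : ℝ) ≤ K * (wordDist S (a : G) (b : G)) + C ∧
      (wordDist S (a : G) (b : G) : ℝ) ≤ K * (wordDist T a b) + C

/-- Quasi-isometry between two groups with chosen generating sets. -/
def QuasiIsometric (G : Type*) [Group G] (S : Set G) (H : Type*) [Group H] (T : Set H) :
    Prop :=
  ∃ (φ : G → H) (K C : ℝ), 1 ≤ K ∧ 0 ≤ C ∧
    (∀ a b : G,
      (wordDist T (φ a) (φ b) : ℝ) ≤ K * (wordDist S a b) + C ∧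
        (wordDist S a b : ℝ) ≤ K * (wordDist T (φ a) (φ b)) + C) ∧
    ∀ h : H, ∃ g : G, (wordDist T (φ g) h : ℝ) ≤ C

/-- A group action on a graph by graph automorphisms. -/
def ActsOnGraph (G : Type*) [Group G] {V : Type*} [MulAction G V] (Γ : SimpleGraph V) :
    Prop :=
  ∀ (g : G) (v w : V), Γ.Adj v w → Γ.Adj (g • v) (g • w)

/-- Relators of the right-angled Coxeter group of a graph. -/
def racgRels {V : Type*} (Γ : SimpleGraph V) : Set (FreeGroup V) :=
  {r | ∃ v : V, r = FreeGroup.of v * FreeGroup.of v} ∪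
    {r | ∃ v w : V, Γ.Adj v w ∧ r = (FreeGroup.of v * FreeGroup.of w) ^ 2}

/-- The right-angled Coxeter group of a simplicial graph. -/
abbrev RACG {V : Type*} (Γ : SimpleGraph V) : Type _ := PresentedGroup (racgRels Γ)

/-- The standard (vertex) generating set of a RACG. -/
def racgGen {V : Type*} (Γ : SimpleGraph V) : Set (RACG Γ) :=
  Set.range fun v : V => (PresentedGroup.of v : RACG Γ)

/-- The special subgroup of a RACG generated by a set of vertices. -/
def specialSubgroup {V : Type*} (Γ : SimpleGraph V) (J : Set V) : Subgroup (RACG Γ) :=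
  Subgroup.closure ((fun v : V => (PresentedGroup.of v : RACG Γ)) '' J)

/-- Relators of the right-angled Artin group of a graph. -/
def raagRels {V : Type*} (Γ : SimpleGraph V) : Set (FreeGroup V) :=
  {r | ∃ v w : V, Γ.Adj v w ∧
    r = FreeGroup.of v * FreeGroup.of w * (FreeGroup.of v)⁻¹ * (FreeGroup.of w)⁻¹}

/-- The right-angled Artin group of a simplicial graph. -/
abbrev RAAG {V : Type*} (Γ : SimpleGraph V) : Type _ := PresentedGroup (raagRels Γ)

/-- The standard (vertex) generating set of a RAAG. -/
def raagGen {V : Type*} (Γ : SimpleGraph V) : Set (RAAG Γ) :=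
  Set.range fun v : V => (PresentedGroup.of v : RAAG Γ)

/-- The coned-off Cayley graph of `G` with respect to the generating set `S` and the
peripheral collection `P`. -/
def conedOffCayley (G : Type*) [Group G] (S : Set G) {ι : Type*} (P : ι → Subgroup G) :
    SimpleGraph (G ⊕ Σ i : ι, G ⧸ P i) :=
  SimpleGraph.fromRel fun x y =>
    match x, y with
    | Sum.inl g, Sum.inl h => g⁻¹ * h ∈ S
    | Sum.inl g, Sum.inr ⟨i, c⟩ => (QuotientGroup.mk g : G ⧸ P i) = c
    | _, _ => False

/-- A connected graph is hyperbolic if its path metric satisfies the four-point condition. -/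
def IsHyperbolicGraph {α : Type*} (Γ : SimpleGraph α) : Prop :=
  Γ.Connected ∧ ∃ δ : ℝ, 0 ≤ δ ∧ ∀ x y z w : α,
    (Γ.dist x y : ℝ) + (Γ.dist z w : ℝ) ≤
      max ((Γ.dist x z : ℝ) + (Γ.dist y w : ℝ)) ((Γ.dist x w : ℝ) + (Γ.dist y z : ℝ)) + δ

/-- A graph is fine if each edge lies in only finitely many circuits of each bounded length. -/
def IsFineGraph {α : Type*} (Γ : SimpleGraph α) : Prop :=
  ∀ (n : ℕ) (v w : α), Γ.Adj v w →
    {p : Γ.Walk v v | p.IsCircuit ∧ p.length ≤ n ∧ s(v, w) ∈ p.edges}.Finite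

/-- `G` is hyperbolic relative to the finite collection of subgroups `P`. -/
def RelativelyHyperbolic (G : Type*) [Group G] {ι : Type*} (P : ι → Subgroup G) : Prop :=
  Finite ι ∧ ∃ S : Finset G, Subgroup.closure (S : Set G) = ⊤ ∧
    IsHyperbolicGraph (conedOffCayley G (S : Set G) P) ∧
    IsFineGraph (conedOffCayley G (S : Set G) P)

/-- There is a path from `x` to `y` of length at most `L` in the Cayley graph of `(G,S)`
avoiding the ball of radius `r` about the identity. -/
def PathAvoiding {G : Type*} [Group G] (S : Set G) (r : ℕ) (x y : G) (L : ℕ) : Prop :=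
  ∃ (m : ℕ) (p : Fin (m + 1) → G), p 0 = x ∧ p (Fin.last m) = y ∧ m ≤ L ∧
    (∀ i : Fin m, wordDist S (p i.castSucc) (p i.succ) ≤ 1) ∧
    ∀ i, r ≤ wordDist S 1 (p i)

/-- The divergence of `(G,S)` is bounded above by (a linear function of) `f`. -/
def DivergenceUpperBound (G : Type*) [Group G] (S : Set G) (f : ℕ → ℕ) : Prop :=
  ∃ A B : ℕ, 0 < A ∧ ∀ (n : ℕ) (x y : G), wordDist S 1 x = n → wordDist S 1 y = n →
    PathAvoiding S (n / 2) x y (A * f n + B)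

/-- The divergence of `(G,S)` is bounded below by (a linear function of) `f`. -/
def DivergenceLowerBound (G : Type*) [Group G] (S : Set G) (f : ℕ → ℕ) : Prop :=
  ∃ A B : ℕ, 0 < A ∧ ∀ N : ℕ, ∃ n, N ≤ n ∧ ∃ x y : G,
    wordDist S 1 x = n ∧ wordDist S 1 y = n ∧
    ∀ L : ℕ, PathAvoiding S (n / 2) x y L → f n ≤ A * L + B

def HasLinearDivergence (G : Type*) [Group G] (S : Set G) : Prop :=
  DivergenceUpperBound G S (fun n => n) ∧ DivergenceLowerBound G S (fun n => n)

def HasQuadraticDivergence (G : Type*) [Group G] (S : Set G) : Prop :=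
  DivergenceUpperBound G S (fun n => n ^ 2) ∧ DivergenceLowerBound G S (fun n => n ^ 2)

def HasExponentialDivergence (G : Type*) [Group G] (S : Set G) : Prop :=
  (∃ b : ℕ, 2 ≤ b ∧ DivergenceUpperBound G S (fun n => b ^ n)) ∧
    DivergenceLowerBound G S (fun n => 2 ^ n)

/-- `c` parametrizes an induced 4-cycle of `Γ`. -/
def IsInducedFourCycle {V : Type*} (Γ : SimpleGraph V) (c : Fin 4 → V) : Prop :=
  Function.Injective c ∧ ∀ i j : Fin 4, Γ.Adj (c i) (c j) ↔ (j = i + 1 ∨ i = j + 1)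

/-- `s` is the vertex set of an induced 4-cycle of `Γ`. -/
def IsFourCycleSet {V : Type*} (Γ : SimpleGraph V) (s : Set V) : Prop :=
  ∃ c : Fin 4 → V, IsInducedFourCycle Γ c ∧ Set.range c = s

/-- The four-cycle graph `Γ⁴`: vertices are the induced 4-cycles of `Γ`, adjacent when the
corresponding 4-cycles share a pair of non-adjacent vertices. -/
def fourCycleGraph {V : Type*} (Γ : SimpleGraph V) :
    SimpleGraph {s : Set V // IsFourCycleSet Γ s} :=
  SimpleGraph.fromRel fun s t =>
    ∃ a b : V, a ≠ b ∧ ¬ Γ.Adj a b ∧ a ∈ s.1 ∩ t.1 ∧ b ∈ s.1 ∩ t.1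

/-- `Γ` is CFS: `Γ = Ω * K` with `K` a (possibly empty) clique and `Ω` nonempty such that
`Ω⁴` has a connected component whose support is all of `V(Ω)`. -/
def CFS {V : Type*} (Γ : SimpleGraph V) : Prop :=
  ∃ Ω K : Set V, Ω ∪ K = Set.univ ∧ Disjoint Ω K ∧ Ω.Nonempty ∧
    (∀ a ∈ K, ∀ b ∈ K, a ≠ b → Γ.Adj a b) ∧
    (∀ a ∈ Ω, ∀ b ∈ K, Γ.Adj a b) ∧
    ∃ s₀ : {s : Set ↥Ω // IsFourCycleSet (Γ.induce Ω) s},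
      ∀ v : ↥Ω, ∃ t : {s : Set ↥Ω // IsFourCycleSet (Γ.induce Ω) s},
        (fourCycleGraph (Γ.induce Ω)).Reachable s₀ t ∧ v ∈ t.1

/-- A (topological) planar embedding of the graph `Γ`: vertices go to distinct points of the
plane, each edge to an arc between the images of its endpoints, arcs meeting only at common
endpoint vertices. -/
structure PlanarEmbedding {V : Type*} (Γ : SimpleGraph V) where
  vmap : V → ℝ × ℝ
  inj : Function.Injective vmap
  emap : Sym2 V → Set (ℝ × ℝ)
  arc : ∀ ⦃u v : V⦄, Γ.Adj u v → ∃ γ : Path (vmap u) (vmap v),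
    Function.Injective (⇑γ) ∧ Set.range (⇑γ) = emap s(u, v)
  disjointEdges : ∀ e ∈ Γ.edgeSet, ∀ e' ∈ Γ.edgeSet, e ≠ e' →
    emap e ∩ emap e' ⊆ Set.range vmap
  vertexOnEdge : ∀ e ∈ Γ.edgeSet, ∀ v : V, vmap v ∈ emap e → v ∈ e

/-- The image in the plane of the full subgraph of `Γ` spanned by the vertex set `W`. -/
def PlanarEmbedding.imageOf {V : Type*} {Γ : SimpleGraph V} (f : PlanarEmbedding Γ)
    (W : Set V) : Set (ℝ × ℝ) :=
  (f.vmap '' W) ∪ ⋃ (e : Sym2 V) (_ : e ∈ Γ.edgeSet) (_ : ∀ x ∈ e, x ∈ W), f.emap e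

/-- The 4-cycle `c` strongly separates the subgraph of `Γ` spanned by `W` with respect to the
embedding `f`: the image of the subgraph meets (at least) two distinct connected components of
the complement of the image of `c`. -/
def StronglySeparatesIn {V : Type*} {Γ : SimpleGraph V} (f : PlanarEmbedding Γ)
    (c : Fin 4 → V) (W : Set V) : Prop :=
  ∃ x y : ℝ × ℝ, x ∈ f.imageOf W ∧ y ∈ f.imageOf W ∧
    x ∉ f.imageOf (Set.range c) ∧ y ∉ f.imageOf (Set.range c) ∧
    y ∉ connectedComponentIn (f.imageOf (Set.range c))ᶜ x

/-- `(W₁, W₂)` is a strong visual decomposition of `Γ` along the induced 4-cycle `c`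
with respect to the embedding `f`. -/
def StrongVisualDecomposition {V : Type*} {Γ : SimpleGraph V} (f : PlanarEmbedding Γ)
    (c : Fin 4 → V) (W₁ W₂ : Set V) : Prop :=
  IsInducedFourCycle Γ c ∧
  W₁ ∪ W₂ = Set.univ ∧ W₁ ∩ W₂ = Set.range c ∧
  (W₁ \ Set.range c).Nonempty ∧ (W₂ \ Set.range c).Nonempty ∧
  (∀ v ∈ W₁ \ Set.range c, ∀ w ∈ W₂ \ Set.range c,
    f.vmap w ∉ connectedComponentIn (f.imageOf (Set.range c))ᶜ (f.vmap v)) ∧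
  (∀ u v : V, Γ.Adj u v → (u ∈ W₁ ∧ v ∈ W₁) ∨ (u ∈ W₂ ∧ v ∈ W₂))

/-- Standing Assumptions: connected, triangle-free, planar, at least five vertices,
no separating vertices or edges. -/
def StandingAssumptions {V : Type*} (Γ : SimpleGraph V) : Prop :=
  Γ.Connected ∧ Γ.CliqueFree 3 ∧ Nonempty (PlanarEmbedding Γ) ∧ 5 ≤ Nat.card V ∧
  (∀ v : V, (Γ.induce ({v}ᶜ : Set V)).Connected) ∧
  (∀ u v : V, Γ.Adj u v → (Γ.induce ({u, v}ᶜ : Set V)).Connected)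

/-- `Γ` contains (as a subgraph) a suspension of three distinct points. -/
def ContainsSuspThree {V : Type*} (Γ : SimpleGraph V) : Prop :=
  ∃ (a : Fin 3 → V) (b : Fin 2 → V), Function.Injective a ∧ Function.Injective b ∧
    (∀ i j, a i ≠ b j) ∧ ∀ i j, Γ.Adj (a i) (b j)

/-- `Γ` is (exactly) the suspension of three distinct points. -/
def IsSuspensionOfThreePoints {V : Type*} (Γ : SimpleGraph V) : Prop :=
  ∃ (a : Fin 3 → V) (b : Fin 2 → V), Function.Injective a ∧ Function.Injective b ∧
    (∀ i j, a i ≠ b j) ∧ Set.range a ∪ Set.range b = Set.univ ∧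
    ∀ x y : V, Γ.Adj x y ↔ ((∃ i j, x = a i ∧ y = b j) ∨ (∃ i j, x = b j ∧ y = a i))

/-- `Γ` is a suspension of a set of distinct (pairwise non-adjacent) vertices. -/
def IsSuspension {V : Type*} (Γ : SimpleGraph V) : Prop :=
  ∃ b₁ b₂ : V, b₁ ≠ b₂ ∧ ¬ Γ.Adj b₁ b₂ ∧
    (∀ v, v ≠ b₁ → v ≠ b₂ → Γ.Adj v b₁ ∧ Γ.Adj v b₂) ∧
    (∀ u v, u ≠ b₁ → u ≠ b₂ → v ≠ b₁ → v ≠ b₂ → ¬ Γ.Adj u v)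

/-- `Γ` is a join of two nonempty subgraphs. -/
def IsJoin {V : Type*} (Γ : SimpleGraph V) : Prop :=
  ∃ A B : Set V, A.Nonempty ∧ B.Nonempty ∧ Disjoint A B ∧ A ∪ B = Set.univ ∧
    ∀ a ∈ A, ∀ b ∈ B, Γ.Adj a b

/-- `Γ` is prime: not a 4-cycle, and some planar embedding has no strongly separating
4-cycle. -/
def IsPrime {V : Type*} (Γ : SimpleGraph V) : Prop :=
  (¬ ∃ c : Fin 4 → V, IsInducedFourCycle Γ c ∧ Set.range c = Set.univ) ∧
  ∃ f : PlanarEmbedding Γ, ∀ c : Fin 4 → V, IsInducedFourCycle Γ c →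
    ¬ StronglySeparatesIn f c Set.univ

/-- The closed half-space model for 3-manifolds with boundary. -/
def HalfSpace3 : Set (Fin 3 → ℝ) := {y | 0 ≤ y 0}

/-- A topological 3-manifold, possibly with boundary. -/
def IsManifold3WithBoundary (M : Type*) [TopologicalSpace M] : Prop :=
  T2Space M ∧ SecondCountableTopology M ∧ ∀ x : M, ∃ U : Set M, IsOpen U ∧ x ∈ U ∧
    ∃ W : Set ↥HalfSpace3, IsOpen W ∧ Nonempty (↥U ≃ₜ ↥W)

/-- A compact 3-manifold foliated by circles (Seifert fibered, by Epstein's theorem). -/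
def SeifertLike (M : Type*) [TopologicalSpace M] : Prop :=
  IsManifold3WithBoundary M ∧ CompactSpace M ∧ Nonempty M ∧
  ∃ (B : Type) (_ : TopologicalSpace B) (p : M → B),
    Continuous p ∧ Function.Surjective p ∧ ∀ b : B, Nonempty (↥(p ⁻¹' {b}) ≃ₜ Circle)

abbrev Torus : Type := Circle × Circle

/-- A (non-geometric) graph manifold: a compact 3-manifold, not itself Seifert fibered,
which is a union of finitely many closed Seifert pieces meeting along disjoint unions of
tori. -/
def IsGraphManifold (M : Type*) [TopologicalSpace M] : Prop :=
  IsManifold3WithBoundary M ∧ CompactSpace M ∧ ¬ SeifertLike M ∧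
  ∃ (n : ℕ) (P : Fin n → Set M),
    (⋃ i, P i) = Set.univ ∧
    (∀ i, IsClosed (P i) ∧ SeifertLike ↥(P i)) ∧
    ∀ i j, i ≠ j → ∃ k : ℕ, Nonempty (↥(P i ∩ P j) ≃ₜ (Fin k × Torus))

/-- A pointed topological space. -/
structure PointedSpace where
  carrier : Type
  top : TopologicalSpace carrier
  pt : carrier

attribute [instance] PointedSpace.top

/-- `G` is virtually the fundamental group of a Seifert fibered 3-manifold. -/
def VirtuallySeifert (G : Type*) [Group G] : Prop :=
  ∃ H : Subgroup G, H.FiniteIndex ∧ ∃ X : PointedSpace,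
    SeifertLike X.carrier ∧ Nonempty (H ≃* FundamentalGroup X.carrier X.pt)

/-- `G` is virtually the fundamental group of a graph manifold. -/
def VirtuallyGraphManifold (G : Type*) [Group G] : Prop :=
  ∃ H : Subgroup G, H.FiniteIndex ∧ ∃ X : PointedSpace,
    IsGraphManifold X.carrier ∧ Nonempty (H ≃* FundamentalGroup X.carrier X.pt)

/-- A vertex-colored graph. -/
structure ColoredGraph (C : Type*) where
  V : Type
  graph : SimpleGraph V
  color : V → C

/-- A weak covering of colored graphs: a color-preserving graph homomorphism with the
edge-lifting property. -/
def WeakCovering {C : Type*} (Λ Λ' : ColoredGraph C) (f : Λ.V → Λ'.V) : Prop :=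
  (∀ v, Λ'.color (f v) = Λ.color v) ∧
  (∀ v w, Λ.graph.Adj v w → Λ'.graph.Adj (f v) (f w)) ∧
  (∀ v w', Λ'.graph.Adj (f v) w' → ∃ w, Λ.graph.Adj v w ∧ f w = w')

/-- Two colored graphs are bisimilar if they weakly cover a common colored graph. -/
def Bisimilar {C : Type*} (Λ₁ Λ₂ : ColoredGraph C) : Prop :=
  ∃ (Λ : ColoredGraph C) (f₁ : Λ₁.V → Λ.V) (f₂ : Λ₂.V → Λ.V),
    WeakCovering Λ₁ Λ f₁ ∧ WeakCovering Λ₂ Λ f₂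

/-- Isomorphism of colored graphs. -/
def ColoredIso {C : Type*} (Λ₁ Λ₂ : ColoredGraph C) : Prop :=
  ∃ e : Λ₁.V ≃ Λ₂.V, (∀ v, Λ₂.color (e v) = Λ₁.color v) ∧
    ∀ v w, Λ₁.graph.Adj v w ↔ Λ₂.graph.Adj (e v) (e w)
/-- A visual decomposition tree of a CFS graph `Γ` satisfying the Standing Assumptions:
a finite tree whose vertices carry suspension subgraphs `Γv t = susp(Av t)` (with the two
suspension points `pole1 t`, `pole2 t`), glued along induced 4-cycles. -/
structure VisualDecompTree (V : Type*) (Γ : SimpleGraph V) where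
  T : Type
  finite : Finite T
  tree : SimpleGraph T
  isTree : tree.IsTree
  Γv : T → Set V
  Av : T → Set V
  pole1 : T → V
  pole2 : T → V
  susp : ∀ t : T,
    pole1 t ≠ pole2 t ∧ ¬ Γ.Adj (pole1 t) (pole2 t) ∧
    Γv t = Av t ∪ {pole1 t, pole2 t} ∧ pole1 t ∉ Av t ∧ pole2 t ∉ Av t ∧
    (∀ a ∈ Av t, Γ.Adj a (pole1 t) ∧ Γ.Adj a (pole2 t)) ∧
    (∀ a ∈ Av t, ∀ b ∈ Av t, ¬ Γ.Adj a b)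
  three : ∀ t : T, 3 ≤ Nat.card (Av t)
  distinct : Function.Injective Γv
  covers : (⋃ t : T, Γv t) = Set.univ
  edges4 : ∀ t₁ t₂ : T, tree.Adj t₁ t₂ →
    Γv t₁ ∩ Γv t₂ = {pole1 t₁, pole2 t₁, pole1 t₂, pole2 t₂} ∧
    IsFourCycleSet Γ (Γv t₁ ∩ Γv t₂)
  nonedges : ∀ t₁ t₂ : T, t₁ ≠ t₂ → ¬ tree.Adj t₁ t₂ →
    ¬ IsFourCycleSet Γ (Γv t₁ ∩ Γv t₂)
  polesIn : ∀ t₁ t₂ : T, tree.Adj t₁ t₂ → pole1 t₁ ∈ Av t₂ ∧ pole2 t₁ ∈ Av t₂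

/-- The weight of a vertex of a visual decomposition tree. -/
noncomputable def VisualDecompTree.weight {V : Type*} {Γ : SimpleGraph V} (D : VisualDecompTree V Γ)
    (t : D.T) : ℕ := Nat.card (D.Av t)

/-- The degree of a vertex of a visual decomposition tree. -/
noncomputable def VisualDecompTree.degree {V : Type*} {Γ : SimpleGraph V} (D : VisualDecompTree V Γ)
    (t : D.T) : ℕ := Nat.card (D.tree.neighborSet t)

/-- A vertex is black if its weight strictly exceeds its degree (white otherwise). -/
def VisualDecompTree.Black {V : Type*} {Γ : SimpleGraph V} (D : VisualDecompTree V Γ)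
    (t : D.T) : Prop := D.degree t < D.weight t

/-- The visual decomposition tree as a colored graph (colored by the black/white property). -/
def VisualDecompTree.colored {V : Type*} {Γ : SimpleGraph V} (D : VisualDecompTree V Γ) :
    ColoredGraph Prop :=
  ⟨D.T, D.tree, fun t => D.Black t⟩

/-! Every edge of `Γ` leaving `W₁ \ σ` stays in `W₁`, so a path of `Γ - S` starting in `W₁`
can be followed until it first meets `σ` without leaving `W₁`. When `S` is a clique it meets the
induced 4-cycle `σ` in at most an edge, so `σ - S` is still connected and ties these pieces
together: removing the empty set, a vertex or an edge from `Γ₁` leaves it connected. Planarity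
and triangle-freeness pass to induced subgraphs, and `Γ₁` contains `σ` and one more vertex. -/

section InducedConnectivity

open SimpleGraph

variable {V : Type*} {G : SimpleGraph V}

theorem connected_induce_diff_of_boundary_subset {W C S : Set V}
    (hG : (G.induce Sᶜ).Connected) (hCW : C ⊆ W) (hC : (G.induce (C \ S)).Connected)
    (hbdry : ∀ u v, G.Adj u v → u ∈ W → u ∉ C → v ∈ W) :
    (G.induce (W \ S)).Connected := by
  obtain ⟨⟨c₀, hc₀⟩⟩ := hC.nonempty
  have hc₀W : c₀ ∈ W \ S := ⟨hCW hc₀.1, hc₀.2⟩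
  have reach_of_mem : ∀ x (hx : x ∈ C \ S),
      (G.induce (W \ S)).Reachable ⟨x, hCW hx.1, hx.2⟩ ⟨c₀, hc₀W⟩ := fun x hx =>
    (hC.preconnected ⟨x, hx⟩ ⟨c₀, hc₀⟩).map
      (induceHomOfLE G (sdiff_subset_sdiff_left hCW)).toHom
  have reach_of_walk : ∀ (a b : ↥Sᶜ) (_ : (G.induce Sᶜ).Walk a b), (b : V) ∈ C →
      ∀ ha : (a : V) ∈ W, (G.induce (W \ S)).Reachable ⟨a, ha, a.2⟩ ⟨c₀, hc₀W⟩ := by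
    intro a b p
    induction p with
    | @nil u => exact fun hb _ => reach_of_mem _ ⟨hb, u.2⟩
    | @cons a b _ hab _ ih =>
      intro hb ha
      by_cases haC : (a : V) ∈ C
      · exact reach_of_mem _ ⟨haC, a.2⟩
      · have hbW := hbdry _ _ hab ha haC
        have hab' : (G.induce (W \ S)).Adj ⟨a, ha, a.2⟩ ⟨b, hbW, b.2⟩ := hab
        exact hab'.reachable.trans (ih hb hbW)
  refine (connected_iff_exists_forall_reachable _).2 ⟨⟨c₀, hc₀W⟩, fun ⟨x, hx⟩ => ?_⟩
  have p := (hG.preconnected ⟨x, hx.2⟩ ⟨c₀, hc₀.2⟩).some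
  exact (reach_of_walk _ _ p hc₀.1 hx.1).symm

theorem connected_induce_induce_compl {W : Set V} {T : Set W}
    (h : (G.induce (W \ (↑) '' T)).Connected) : ((G.induce W).induce Tᶜ).Connected := by
  refine h.map ⟨fun x => ⟨⟨x.1, x.2.1⟩, fun hx => x.2.2 ⟨_, hx, rfl⟩⟩, id⟩ ?_
  rintro ⟨⟨x, hxW⟩, hxT⟩
  exact ⟨⟨x, hxW, by rintro ⟨y, hyT, rfl⟩; exact hxT hyT⟩, rfl⟩

end InducedConnectivity

namespace IsInducedFourCycle

open SimpleGraph

variable {V : Type*} {G : SimpleGraph V} {c : Fin 4 → V}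

theorem not_adj_add_two (hc : IsInducedFourCycle G c) (i : Fin 4) : ¬ G.Adj (c i) (c (i + 2)) := by
  rw [hc.2]
  grind

theorem exists_notMem_of_isClique (hc : IsInducedFourCycle G c) {S : Set V}
    (hS : G.IsClique S) : ∃ k : Fin 4, c (k + 2) ∉ S ∧ c (k + 3) ∉ S := by
  by_cases hσS : ∃ m, c m ∈ S
  · obtain ⟨m, hm⟩ := hσS
    have opposite : ∀ i, c i ∈ S → c (i + 2) ∉ S := fun i hi hi₂ =>
      hc.not_adj_add_two i (hS hi hi₂ (hc.1.ne (by grind)))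
    by_cases hm₃ : c (m + 3) ∈ S
    · refine ⟨m + 3, opposite _ hm₃, ?_⟩
      rw [show m + 3 + 3 = m + 2 by grind]
      exact opposite m hm
    · exact ⟨m, opposite m hm, hm₃⟩
  · simp only [not_exists] at hσS
    exact ⟨0, hσS _, hσS _⟩

theorem connected_induce_range_diff (hc : IsInducedFourCycle G c) {S : Set V}
    (hS : G.IsClique S) : (G.induce (range c \ S)).Connected := by
  obtain ⟨k, hk₂, hk₃⟩ := hc.exists_notMem_of_isClique hS
  have reach_of_adj : ∀ {i j : Fin 4} (hi : c i ∉ S) (hj : c j ∉ S),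
      j = i + 1 ∨ i = j + 1 →
      (G.induce (range c \ S)).Reachable ⟨c i, ⟨i, rfl⟩, hi⟩ ⟨c j, ⟨j, rfl⟩, hj⟩ :=
    fun hi hj hij => Adj.reachable ((hc.2 _ _).2 hij)
  refine (connected_iff_exists_forall_reachable _).2 ⟨⟨c (k + 2), ⟨_, rfl⟩, hk₂⟩, ?_⟩
  rintro ⟨_, ⟨j, rfl⟩, hj⟩
  rcases (by grind : j = k ∨ j = k + 1 ∨ j = k + 2 ∨ j = k + 3) with rfl | rfl | rfl | rfl
  · exact (reach_of_adj hk₂ hk₃ (by grind)).trans (reach_of_adj hk₃ hj (by grind))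
  · exact reach_of_adj hk₂ hj (by grind)
  · rfl
  · exact reach_of_adj hk₂ hj (by grind)

end IsInducedFourCycle

open SimpleGraph in
noncomputable def PlanarEmbedding.induce {V : Type*} {Γ : SimpleGraph V}
    (f : PlanarEmbedding Γ) (W : Set V) : PlanarEmbedding (Γ.induce W) where
  vmap := f.vmap ∘ (↑)
  inj := f.inj.comp Subtype.val_injective
  emap e := f.emap (e.map (↑))
  arc {u v} h := by
    obtain ⟨γ, hinj, hrange⟩ := f.arc (show Γ.Adj u v from h)
    exact ⟨γ, hinj, by simp [hrange]⟩
  disjointEdges e he e' he' hne x hx := by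
    have hmap := fun {e} (he : e ∈ (Γ.induce W).edgeSet) =>
      (Embedding.induce W).toHom.map_mem_edgeSet he
    obtain ⟨w, rfl⟩ := f.disjointEdges _ (hmap he) _ (hmap he')
      (fun h => hne (Sym2.map.injective Subtype.val_injective h)) hx
    obtain ⟨u, -, rfl⟩ := Sym2.mem_map.1 (f.vertexOnEdge _ (hmap he) w hx.1)
    exact ⟨u, rfl⟩
  vertexOnEdge e he v hv := by
    obtain ⟨u, hu, huv⟩ :=
      Sym2.mem_map.1 (f.vertexOnEdge _ ((Embedding.induce W).toHom.map_mem_edgeSet he) v hv)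
    rwa [← Subtype.val_injective huv]

theorem mem_of_adj_of_mem_diff {V : Type*} {Γ : SimpleGraph V} {W₁ W₂ C : Set V}
    (hinter : W₁ ∩ W₂ = C)
    (hedge : ∀ u v, Γ.Adj u v → (u ∈ W₁ ∧ v ∈ W₁) ∨ (u ∈ W₂ ∧ v ∈ W₂)) :
    ∀ u v, Γ.Adj u v → u ∈ W₁ → u ∉ C → v ∈ W₁ := fun u v huv hu huC =>
  (hedge u v huv).elim And.right fun h => absurd (hinter ▸ ⟨hu, h.1⟩) huC

open SimpleGraph in
theorem StandingAssumptions.induce_of_fourCycle_boundary {V : Type*} {Γ : SimpleGraph V}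
    (hSA : StandingAssumptions Γ) {c : Fin 4 → V} {W : Set V} (hc : IsInducedFourCycle Γ c)
    (hcW : range c ⊆ W) (hne : (W \ range c).Nonempty)
    (hbdry : ∀ u v, Γ.Adj u v → u ∈ W → u ∉ range c → v ∈ W) :
    StandingAssumptions (Γ.induce W) := by
  obtain ⟨hconn, htri, ⟨f⟩, hcard, hvert, hedge⟩ := hSA
  have hside : ∀ S : Set V, Γ.IsClique S → (Γ.induce Sᶜ).Connected →
      (Γ.induce (W \ S)).Connected := fun S hS hSc =>
    connected_induce_diff_of_boundary_subset hSc hcW (hc.connected_induce_range_diff hS) hbdry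
  have : Finite V := Nat.finite_of_card_ne_zero (by omega)
  refine ⟨?_, htri.comap (Embedding.induce W).isContained, ⟨f.induce W⟩, ?_,
    fun v => ?_, fun u v huv => ?_⟩
  · have h := hside ∅ isClique_empty (by rwa [compl_empty, (induceUnivIso Γ).connected_iff])
    rwa [sdiff_empty] at h
  · calc 5 = (range c).ncard + 1 := by simp [ncard_range_of_injective hc.1]
      _ ≤ W.ncard := ncard_lt_ncard (hcW.ssubset_of_not_subset (sdiff_nonempty.1 hne))
      _ = Nat.card W := (Nat.card_coe_set_eq W).symm
  · refine connected_induce_induce_compl ?_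
    rw [image_singleton]
    exact hside _ (isClique_singleton _) (hvert v)
  · refine connected_induce_induce_compl ?_
    rw [image_pair]
    exact hside _ (isClique_pair.2 fun _ => huv) (hedge _ _ huv)

/-- Lemma `leb`, first part: each side of a strong visual decomposition of a
graph satisfying the Standing Assumptions again satisfies the Standing Assumptions. -/
theorem stmt_6 {V : Type} (Γ : SimpleGraph V) (hSA : StandingAssumptions Γ)
    (f : PlanarEmbedding Γ) (c : Fin 4 → V) (W₁ W₂ : Set V)
    (hdec : StrongVisualDecomposition f c W₁ W₂) :
    StandingAssumptions (Γ.induce W₁) ∧ StandingAssumptions (Γ.induce W₂) := by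
  obtain ⟨hc, -, hinter, hne₁, hne₂, -, hedge⟩ := hdec
  have hinter' : W₂ ∩ W₁ = range c := by rw [inter_comm, hinter]
  exact ⟨hSA.induce_of_fourCycle_boundary hc (hinter ▸ inter_subset_left) hne₁
      (mem_of_adj_of_mem_diff hinter hedge),
    hSA.induce_of_fourCycle_boundary hc (hinter' ▸ inter_subset_left) hne₂
      (mem_of_adj_of_mem_diff hinter' fun u v huv => (hedge u v huv).symm)⟩

end Paper
end

section
/- Let Γ satisfy the Standing Assumptions (connected, triangle-free, planar, at least five vertices, no separating vertices or edges) and let (Γ_1, Γ_2) be a strong visual decomposition of Γ along a 4-cycle σ. If Γ is CFS, then each Γ_i is CFS. -/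
open Set

namespace Paper

/-!
Triangle-freeness forces the clique factor of a CFS graph to be empty, so `Γ⁴` has a component
`C` supported on all of `Γ`. Project the squares of `Γ` to `Γ₁⁴`: a square lying in `Γ₁` goes to
itself, any other square goes to `σ`. If a square `τ` leaves `Γ₁`, a vertex `z ∈ τ` outside `Γ₁`
is adjacent to both ends of every diagonal of `τ` lying in `Γ₁`, so that diagonal lies in `σ`;
hence adjacent squares project to equal or adjacent squares, and `C` projects into one component
of `Γ₁⁴`, which contains `σ`. A vertex `v ∈ Γ₁ \ σ` on a square of `C` leaving `Γ₁` has both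
its neighbours on that square in `σ`; they are opposite on `σ`, and together with `v` and a
vertex of `σ` between them span a square of `Γ₁` adjacent to `σ`.
-/

section FourCycles

variable {V W : Type*} {Γ : SimpleGraph V} {H : SimpleGraph W}

lemma not_adj_of_cliqueFree_three (h : Γ.CliqueFree 3) {x y z : V} (hxy : Γ.Adj x y)
    (hxz : Γ.Adj x z) : ¬Γ.Adj y z := fun hyz =>
  SimpleGraph.isIndepSet_neighborSet_of_triangleFree _ h x hxy hxz hyz.ne hyz

lemma isInducedFourCycle_of_adj {a b x y : V} (hab : Γ.Adj a b) (hbx : Γ.Adj b x)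
    (hxy : Γ.Adj x y) (hya : Γ.Adj y a) (hax : ¬Γ.Adj a x) (hby : ¬Γ.Adj b y) (hax' : a ≠ x)
    (hby' : b ≠ y) : IsInducedFourCycle Γ ![a, b, x, y] := by
  have hxa : ¬Γ.Adj x a := fun h => hax h.symm
  have hyb : ¬Γ.Adj y b := fun h => hby h.symm
  constructor
  · intro i j hij
    fin_cases i <;> fin_cases j <;> simp_all [hab.ne, hbx.ne, hxy.ne, hya.ne]
  · intro i j
    fin_cases i <;> fin_cases j <;>
      simp [hab, hbx, hxy, hya, hab.symm, hbx.symm, hxy.symm, hya.symm, hax, hby, hxa, hyb]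

namespace IsInducedFourCycle

variable {c : Fin 4 → V}

lemma adj (hc : IsInducedFourCycle Γ c) {i j : Fin 4} (h : j = i + 1 ∨ i = j + 1) :
    Γ.Adj (c i) (c j) :=
  (hc.2 i j).2 h

lemma rotate (hc : IsInducedFourCycle Γ c) (m : Fin 4) :
    IsInducedFourCycle Γ (fun i => c (i + m)) := by
  refine ⟨hc.1.comp (add_left_injective m), fun i j => (hc.2 _ _).trans ?_⟩
  have key : ∀ i j m : Fin 4,
      (j + m = i + m + 1 ∨ i + m = j + m + 1) ↔ (j = i + 1 ∨ i = j + 1) := by decide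
  exact key i j m

lemma exists_rotate_eq (hc : IsInducedFourCycle Γ c) {a b : V} (ha : a ∈ range c)
    (hb : b ∈ range c) (hab : a ≠ b) (hn : ¬Γ.Adj a b) :
    ∃ d : Fin 4 → V, IsInducedFourCycle Γ d ∧ range d = range c ∧ d 0 = a ∧ d 2 = b := by
  obtain ⟨i, rfl⟩ := ha
  obtain ⟨j, rfl⟩ := hb
  have hji : j = i + 2 := by
    have key : ∀ i j : Fin 4, i ≠ j → ¬(j = i + 1 ∨ i = j + 1) → j = i + 2 := by decide
    exact key i j (ne_of_apply_ne c hab) fun h => hn (hc.adj h)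
  refine ⟨fun k => c (k + i), hc.rotate i, ?_, by simp, by simp [hji, add_comm]⟩
  exact (Equiv.addRight i).surjective.range_comp c

lemma vecCons_of_adj (hfree : Γ.CliqueFree 3) (hc : IsInducedFourCycle Γ c) {v : V}
    (h₀ : Γ.Adj v (c 0)) (h₂ : Γ.Adj v (c 2)) (h₁ : v ≠ c 1) :
    IsInducedFourCycle Γ ![v, c 0, c 1, c 2] :=
  isInducedFourCycle_of_adj h₀ (hc.adj (by decide)) (hc.adj (by decide)) h₂.symm
    (not_adj_of_cliqueFree_three hfree h₀.symm (hc.adj (by decide)))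
    (fun h => by simpa using (hc.2 0 2).1 h) h₁ (fun h => by simpa using hc.1 h)

end IsInducedFourCycle

lemma IsFourCycleSet.adj_of_not_adj {s : Set V} (hs : IsFourCycleSet Γ s) {a b z : V}
    (ha : a ∈ s) (hb : b ∈ s) (hz : z ∈ s) (hab : a ≠ b) (hn : ¬Γ.Adj a b) (hza : z ≠ a)
    (hzb : z ≠ b) : Γ.Adj z a := by
  obtain ⟨c, hc, rfl⟩ := hs
  obtain ⟨d, hd, hdc, rfl, rfl⟩ := hc.exists_rotate_eq ha hb hab hn
  rw [← hdc] at hz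
  obtain ⟨k, rfl⟩ := hz
  have key : ∀ k : Fin 4, k ≠ 0 → k ≠ 2 → (0 = k + 1 ∨ k = 0 + 1) := by decide
  exact hd.adj (key k (ne_of_apply_ne d hza) (ne_of_apply_ne d hzb))

lemma IsFourCycleSet.image (φ : Γ ≃g H) {s : Set V} (hs : IsFourCycleSet Γ s) :
    IsFourCycleSet H (φ '' s) := by
  obtain ⟨c, ⟨hinj, hadj⟩, rfl⟩ := hs
  refine ⟨φ ∘ c, ⟨φ.injective.comp hinj, fun i j => ?_⟩, range_comp φ c⟩
  rw [Function.comp_apply, Function.comp_apply, φ.map_adj_iff]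
  exact hadj i j

end FourCycles

section FourCycleGraph

variable {V W : Type*} {Γ : SimpleGraph V} {H : SimpleGraph W}

def SharesDiagonal (Γ : SimpleGraph V) (s t : Set V) : Prop :=
  ∃ a b : V, a ≠ b ∧ ¬Γ.Adj a b ∧ a ∈ s ∩ t ∧ b ∈ s ∩ t

lemma SharesDiagonal.symm {s t : Set V} (h : SharesDiagonal Γ s t) : SharesDiagonal Γ t s := by
  obtain ⟨a, b, hab, hn, ha, hb⟩ := h
  exact ⟨a, b, hab, hn, ⟨ha.2, ha.1⟩, ⟨hb.2, hb.1⟩⟩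

lemma sharesDiagonal_of_adj {s t : {s : Set V // IsFourCycleSet Γ s}}
    (h : (fourCycleGraph Γ).Adj s t) : SharesDiagonal Γ s.1 t.1 := by
  rw [fourCycleGraph, SimpleGraph.fromRel_adj] at h
  exact h.2.elim id SharesDiagonal.symm

lemma SharesDiagonal.reachable {s t : {s : Set V // IsFourCycleSet Γ s}}
    (h : SharesDiagonal Γ s.1 t.1) : (fourCycleGraph Γ).Reachable s t := by
  by_cases hst : s = t
  · exact hst ▸ .rfl
  · exact SimpleGraph.Adj.reachable ((SimpleGraph.fromRel_adj _ _ _).2 ⟨hst, .inl h⟩)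

lemma SharesDiagonal.preimage_val {U s t : Set V} (hs : s ⊆ U) (h : SharesDiagonal Γ s t) :
    SharesDiagonal (Γ.induce U) ((↑) ⁻¹' s) ((↑) ⁻¹' t) := by
  obtain ⟨a, b, hab, hn, ha, hb⟩ := h
  exact ⟨⟨a, hs ha.1⟩, ⟨b, hs hb.1⟩, fun h => hab (congrArg Subtype.val h), by simpa using hn,
    ha, hb⟩

lemma SharesDiagonal.image (φ : Γ ≃g H) {s t : Set V} (h : SharesDiagonal Γ s t) :
    SharesDiagonal H (φ '' s) (φ '' t) := by
  obtain ⟨a, b, hab, hn, ha, hb⟩ := h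
  exact ⟨φ a, φ b, φ.injective.ne hab, by rwa [φ.map_adj_iff], ⟨mem_image_of_mem φ ha.1,
    mem_image_of_mem φ ha.2⟩, ⟨mem_image_of_mem φ hb.1, mem_image_of_mem φ hb.2⟩⟩

lemma IsFourCycleSet.induce {U s : Set V} (hs : IsFourCycleSet Γ s) (hsU : s ⊆ U) :
    IsFourCycleSet (Γ.induce U) ((↑) ⁻¹' s) := by
  obtain ⟨c, ⟨hinj, hadj⟩, rfl⟩ := hs
  refine ⟨fun i => ⟨c i, hsU (mem_range_self i)⟩,
    ⟨fun i j hij => hinj (congrArg Subtype.val hij), fun i j => by simpa using hadj i j⟩, ?_⟩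
  ext x
  simp [Subtype.ext_iff]

lemma reachable_of_adj_imp_reachable {α β : Type*} {G : SimpleGraph α} {G' : SimpleGraph β}
    (F : α → β) (hF : ∀ a b, G.Adj a b → G'.Reachable (F a) (F b)) {a b : α}
    (h : G.Reachable a b) : G'.Reachable (F a) (F b) := by
  rw [SimpleGraph.reachable_iff_reflTransGen] at h ⊢
  exact Relation.ReflTransGen.lift' F (fun a b hab => by
    simpa [Function.onFun, SimpleGraph.reachable_iff_reflTransGen] using hF a b hab) _ _ h

def HasFullSupportComponent (Γ : SimpleGraph V) : Prop :=
  ∃ s₀ : {s : Set V // IsFourCycleSet Γ s},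
    ∀ v : V, ∃ t : {s : Set V // IsFourCycleSet Γ s},
      (fourCycleGraph Γ).Reachable s₀ t ∧ v ∈ t.1

lemma HasFullSupportComponent.of_iso (φ : Γ ≃g H) (hΓ : HasFullSupportComponent Γ) :
    HasFullSupportComponent H := by
  obtain ⟨s₀, hs₀⟩ := hΓ
  let F : {s : Set V // IsFourCycleSet Γ s} → {s : Set W // IsFourCycleSet H s} :=
    fun s => ⟨φ '' s.1, s.2.image φ⟩
  refine ⟨F s₀, fun w => ?_⟩
  obtain ⟨t, hst, hwt⟩ := hs₀ (φ.symm w)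
  refine ⟨F t, reachable_of_adj_imp_reachable F (fun s t h => ?_) hst, φ.symm w, hwt, by simp⟩
  exact ((sharesDiagonal_of_adj h).image φ).reachable

lemma hasFullSupportComponent_of_cfs (hfree : Γ.CliqueFree 3) (h : CFS Γ) :
    HasFullSupportComponent Γ := by
  obtain ⟨Ω, K, hunion, -, -, -, hΩK, s₀, hs₀⟩ := h
  have hK : K = ∅ := by
    refine eq_empty_of_forall_notMem fun b hb => ?_
    obtain ⟨c, hc, -⟩ := s₀.2
    have h01 : Γ.Adj (c 0 : V) (c 1) := by simpa using hc.adj (i := 0) (j := 1) (by decide)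
    exact not_adj_of_cliqueFree_three hfree h01 (hΩK _ (c 0).2 b hb) (hΩK _ (c 1).2 b hb)
  rw [hK, union_empty] at hunion
  subst hunion
  exact HasFullSupportComponent.of_iso (SimpleGraph.induceUnivIso Γ) ⟨s₀, hs₀⟩

lemma cfs_of_hasFullSupportComponent [Nonempty V] (h : HasFullSupportComponent Γ) : CFS Γ :=
  ⟨univ, ∅, union_empty _, disjoint_empty _, univ_nonempty, by simp, by simp,
    h.of_iso (SimpleGraph.induceUnivIso Γ).symm⟩

open Classical in
noncomputable def restrictFourCycle (U : Set V) (σ : {s : Set U // IsFourCycleSet (Γ.induce U) s})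
    (τ : {s : Set V // IsFourCycleSet Γ s}) : {s : Set U // IsFourCycleSet (Γ.induce U) s} :=
  if h : τ.1 ⊆ U then ⟨(↑) ⁻¹' τ.1, τ.2.induce h⟩ else σ

variable {U : Set V} {σ : {s : Set U // IsFourCycleSet (Γ.induce U) s}}
  {τ : {s : Set V // IsFourCycleSet Γ s}}

lemma restrictFourCycle_of_subset (h : τ.1 ⊆ U) :
    restrictFourCycle U σ τ = ⟨(↑) ⁻¹' τ.1, τ.2.induce h⟩ :=
  dif_pos h

lemma restrictFourCycle_of_not_subset (h : ¬τ.1 ⊆ U) : restrictFourCycle U σ τ = σ :=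
  dif_neg h

end FourCycleGraph

section Splitting

variable {V : Type*} {Γ : SimpleGraph V}

structure SplitsAlong (Γ : SimpleGraph V) (W₁ W₂ S : Set V) : Prop where
  inter_eq : W₁ ∩ W₂ = S
  adj_mem : ∀ u v : V, Γ.Adj u v → (u ∈ W₁ ∧ v ∈ W₁) ∨ (u ∈ W₂ ∧ v ∈ W₂)

namespace SplitsAlong

variable {W₁ W₂ S : Set V}

lemma symm (h : SplitsAlong Γ W₁ W₂ S) : SplitsAlong Γ W₂ W₁ S :=
  ⟨inter_comm W₂ W₁ ▸ h.inter_eq, fun u v huv => (h.adj_mem u v huv).symm⟩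

lemma subset_left (h : SplitsAlong Γ W₁ W₂ S) : S ⊆ W₁ :=
  h.inter_eq ▸ inter_subset_left

lemma mem_left_of_adj (h : SplitsAlong Γ W₁ W₂ S) {u v : V} (huv : Γ.Adj u v) (hu : u ∉ W₂) :
    v ∈ W₁ :=
  ((h.adj_mem u v huv).resolve_right fun h => hu h.1).2

lemma mem_of_adj (h : SplitsAlong Γ W₁ W₂ S) {u v : V} (huv : Γ.Adj u v) (hu : u ∉ W₁)
    (hv : v ∈ W₁) : v ∈ S :=
  h.inter_eq ▸ ⟨hv, h.symm.mem_left_of_adj huv hu⟩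

lemma mem_of_not_subset (h : SplitsAlong Γ W₁ W₂ S) {s : Set V} (hs : IsFourCycleSet Γ s)
    (hsW : ¬s ⊆ W₁) {a b : V} (ha : a ∈ s) (hb : b ∈ s) (hab : a ≠ b) (hn : ¬Γ.Adj a b)
    (haW : a ∈ W₁) (hbW : b ∈ W₁) : a ∈ S := by
  obtain ⟨z, hz, hzW⟩ := not_subset.1 hsW
  have hza : Γ.Adj z a := hs.adj_of_not_adj ha hb hz hab hn (ne_of_mem_of_not_mem haW hzW).symm
    (ne_of_mem_of_not_mem hbW hzW).symm
  exact h.mem_of_adj hza hzW haW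

lemma exists_fourCycleSet_of_not_subset {c : Fin 4 → V} (h : SplitsAlong Γ W₁ W₂ (range c))
    (hfree : Γ.CliqueFree 3) (hc : IsInducedFourCycle Γ c) {s : Set V} (hs : IsFourCycleSet Γ s)
    (hsW : ¬s ⊆ W₁) {v : V} (hv : v ∈ s) (hvW : v ∈ W₁) (hvc : v ∉ range c) :
    ∃ t, IsFourCycleSet Γ t ∧ t ⊆ W₁ ∧ v ∈ t ∧ SharesDiagonal Γ t (range c) := by
  have hvW₂ : v ∉ W₂ := fun hv₂ => hvc (h.inter_eq ▸ ⟨hvW, hv₂⟩)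
  obtain ⟨z, hz, hzW⟩ := not_subset.1 hsW
  have hvz : ¬Γ.Adj v z := fun hvz => hzW (h.mem_left_of_adj hvz hvW₂)
  obtain ⟨e, he, rfl⟩ := hs
  obtain ⟨d, hd, -, rfl, rfl⟩ :=
    he.exists_rotate_eq hv hz (ne_of_mem_of_not_mem hvW hzW) hvz
  -- `d 1` and `d 3` are neighbours of both `v = d 0` and `z = d 2`, so they lie on `range c`
  have hσ : ∀ i : Fin 4, i = 1 ∨ i = 3 → d i ∈ range c := fun i hi =>
    h.mem_of_adj (hd.adj (by rcases hi with rfl | rfl <;> decide)) hzW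
      (h.mem_left_of_adj (hd.adj (by rcases hi with rfl | rfl <;> decide)) hvW₂)
  obtain ⟨c', hc', hc'c, hc'₀, hc'₂⟩ := hc.exists_rotate_eq (hσ 1 (.inl rfl)) (hσ 3 (.inr rfl))
    (hd.1.ne (by decide)) fun h13 => by simpa using (hd.2 1 3).1 h13
  have hc'W : ∀ i, c' i ∈ W₁ := fun i => h.subset_left (hc'c ▸ mem_range_self i)
  refine ⟨range ![d 0, c' 0, c' 1, c' 2], ⟨_, hc'.vecCons_of_adj hfree ?_ ?_ ?_, rfl⟩, ?_,
    ⟨0, rfl⟩, ⟨c' 0, c' 2, hc'.1.ne (by decide), fun h02 => by simpa using (hc'.2 0 2).1 h02,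
      ⟨⟨1, rfl⟩, hc'c ▸ mem_range_self 0⟩, ⟨⟨3, rfl⟩, hc'c ▸ mem_range_self 2⟩⟩⟩
  · exact hc'₀ ▸ hd.adj (by decide)
  · exact hc'₂ ▸ hd.adj (by decide)
  · exact fun h1 => hvc (hc'c ▸ h1 ▸ mem_range_self 1)
  · rintro _ ⟨i, rfl⟩
    fin_cases i
    exacts [hvW, hc'W 0, hc'W 1, hc'W 2]

lemma reachable_restrictFourCycle (h : SplitsAlong Γ W₁ W₂ S)
    {σ : {s : Set W₁ // IsFourCycleSet (Γ.induce W₁) s}} (hσ : σ.1 = (↑) ⁻¹' S)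
    {τ τ' : {s : Set V // IsFourCycleSet Γ s}} (hadj : (fourCycleGraph Γ).Adj τ τ') :
    (fourCycleGraph (Γ.induce W₁)).Reachable (restrictFourCycle W₁ σ τ)
      (restrictFourCycle W₁ σ τ') := by
  have leave : ∀ τ τ' : {s : Set V // IsFourCycleSet Γ s}, SharesDiagonal Γ τ.1 τ'.1 →
      τ.1 ⊆ W₁ → ¬τ'.1 ⊆ W₁ →
      (fourCycleGraph (Γ.induce W₁)).Reachable (restrictFourCycle W₁ σ τ) σ := by
    rintro τ τ' ⟨a, b, hab, hn, ha, hb⟩ hτ hτ'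
    have haS := h.mem_of_not_subset τ'.2 hτ' ha.2 hb.2 hab hn (hτ ha.1) (hτ hb.1)
    have hbS := h.mem_of_not_subset τ'.2 hτ' hb.2 ha.2 hab.symm (fun h => hn h.symm) (hτ hb.1)
      (hτ ha.1)
    rw [restrictFourCycle_of_subset hτ]
    refine SharesDiagonal.reachable ?_
    rw [hσ]
    exact SharesDiagonal.preimage_val hτ ⟨a, b, hab, hn, ⟨ha.1, haS⟩, ⟨hb.1, hbS⟩⟩
  have hshare := sharesDiagonal_of_adj hadj
  by_cases hτ : τ.1 ⊆ W₁ <;> by_cases hτ' : τ'.1 ⊆ W₁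
  · rw [restrictFourCycle_of_subset hτ, restrictFourCycle_of_subset hτ']
    exact (hshare.preimage_val hτ).reachable
  · rw [restrictFourCycle_of_not_subset hτ']
    exact leave τ τ' hshare hτ hτ'
  · rw [restrictFourCycle_of_not_subset hτ]
    exact (leave τ' τ hshare.symm hτ' hτ).symm
  · rw [restrictFourCycle_of_not_subset hτ, restrictFourCycle_of_not_subset hτ']

theorem hasFullSupportComponent_induce {c : Fin 4 → V} (h : SplitsAlong Γ W₁ W₂ (range c))
    (hfree : Γ.CliqueFree 3) (hc : IsInducedFourCycle Γ c) (hW₂ : (W₂ \ range c).Nonempty)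
    (hΓ : HasFullSupportComponent Γ) : HasFullSupportComponent (Γ.induce W₁) := by
  let σ : {s : Set W₁ // IsFourCycleSet (Γ.induce W₁) s} :=
    ⟨(↑) ⁻¹' range c, IsFourCycleSet.induce ⟨c, hc, rfl⟩ h.subset_left⟩
  let π := restrictFourCycle W₁ σ
  have hπ : ∀ {τ τ'}, (fourCycleGraph Γ).Reachable τ τ' →
      (fourCycleGraph (Γ.induce W₁)).Reachable (π τ) (π τ') :=
    reachable_of_adj_imp_reachable π fun _ _ => h.reachable_restrictFourCycle rfl
  obtain ⟨s₀, hs₀⟩ := hΓ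
  have hs₀σ : (fourCycleGraph (Γ.induce W₁)).Reachable (π s₀) σ := by
    obtain ⟨y, hyW₂, hyc⟩ := hW₂
    obtain ⟨t, hs₀t, hyt⟩ := hs₀ y
    have htW : ¬t.1 ⊆ W₁ := fun htW => hyc (h.inter_eq ▸ ⟨htW hyt, hyW₂⟩)
    simpa only [π, restrictFourCycle_of_not_subset htW] using hπ hs₀t
  refine ⟨σ, fun v => ?_⟩
  by_cases hvc : (v : V) ∈ range c
  · exact ⟨σ, .rfl, hvc⟩
  obtain ⟨t, hs₀t, hvt⟩ := hs₀ v
  by_cases htW : t.1 ⊆ W₁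
  · refine ⟨π t, hs₀σ.symm.trans (hπ hs₀t), ?_⟩
    rw [show π t = _ from restrictFourCycle_of_subset htW]
    exact hvt
  obtain ⟨u, hu, huW, hvu, hshare⟩ :=
    h.exists_fourCycleSet_of_not_subset hfree hc t.2 htW hvt v.2 hvc
  exact ⟨⟨(↑) ⁻¹' u, hu.induce huW⟩, (hshare.preimage_val huW).symm.reachable,
    mem_preimage.2 hvu⟩

end SplitsAlong

end Splitting

/-- Lemma `leb`, second part: if `Γ` is CFS, then each side of a strong visual
decomposition of `Γ` is CFS. -/
theorem stmt_7 {V : Type} (Γ : SimpleGraph V) (hSA : StandingAssumptions Γ)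
    (f : PlanarEmbedding Γ) (c : Fin 4 → V) (W₁ W₂ : Set V)
    (hdec : StrongVisualDecomposition f c W₁ W₂)
    (hCFS : CFS Γ) :
    CFS (Γ.induce W₁) ∧ CFS (Γ.induce W₂) := by
  obtain ⟨hc, -, hinter, hW₁, hW₂, -, hedge⟩ := hdec
  have hfree : Γ.CliqueFree 3 := hSA.2.1
  have hΓ := hasFullSupportComponent_of_cfs hfree hCFS
  have hsplit : SplitsAlong Γ W₁ W₂ (range c) := ⟨hinter, hedge⟩
  have : Nonempty W₁ := (hW₁.mono sdiff_subset).to_subtype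
  have : Nonempty W₂ := (hW₂.mono sdiff_subset).to_subtype
  exact ⟨cfs_of_hasFullSupportComponent (hsplit.hasFullSupportComponent_induce hfree hc hW₂ hΓ),
    cfs_of_hasFullSupportComponent (hsplit.symm.hasFullSupportComponent_induce hfree hc hW₁ hΓ)⟩

end Paper
end
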